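/- arXiv:1902.08247 — 4 statements merged into one kernel-verified Lean document; each statement's English description precedes it below -/
import Mathlib

section
/- Let Δ be the operator Δf = -f_tt + (sin t / cos t) f_t - (1/cos² t) f_φφ and x₁(t,φ) = (a + r cos t) cos φ. Then Δ² x₁ = (2/cos² t - 3/cos⁴ t) a cos φ + 4 r cos t cos φ on the domain where cos t ≠ 0. -/
open Real

/-- partial derivative in the first variable `t` -/
noncomputable def pderivT (f : ℝ → ℝ → ℝ) : ℝ → ℝ → ℝ := fun t φ => deriv (fun s => f s φ) t

/-- partial derivative in the second variable `φ` -/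
noncomputable def pderivP (f : ℝ → ℝ → ℝ) : ℝ → ℝ → ℝ := fun t φ => deriv (fun ψ => f t ψ) φ

/-- The Beltrami operator of the third fundamental form of an anchor ring:
`Δf = -f_tt + (sin t / cos t) f_t - (1/cos² t) f_φφ`. -/
noncomputable def DeltaIII (f : ℝ → ℝ → ℝ) : ℝ → ℝ → ℝ := fun t φ =>
  - pderivT (pderivT f) t φ + (Real.sin t / Real.cos t) * pderivT f t φ
    - (1 / (Real.cos t) ^ 2) * pderivP (pderivP f) t φ

/-!
On functions `g t * cos φ` the operator `Δ` acts through the ordinary differential operator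
`L g = -g'' + tan t · g' + g / cos² t` on the profile `g`, so `Δ² x₁ = (L (L g)) cos φ` with
`g = a + r cos t`. One computes `L g = a / cos² t + 2 r cos t`, and a second application gives
the claim.
-/

open Filter Topology

noncomputable def deltaIIIProfile (g : ℝ → ℝ) (t : ℝ) : ℝ :=
  -deriv (deriv g) t + sin t / cos t * deriv g t + g t / cos t ^ 2

lemma pderivT_mul_cos (g : ℝ → ℝ) :
    pderivT (fun t φ => g t * cos φ) = fun t φ => deriv g t * cos φ := by
  ext t φ
  exact deriv_mul_const_field _

lemma pderivP_pderivP_mul_cos (g : ℝ → ℝ) :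
    pderivP (pderivP (fun t φ => g t * cos φ)) = fun t φ => -(g t * cos φ) := by
  have hP : pderivP (fun t φ => g t * cos φ) = fun t φ => -(g t * sin φ) := by
    ext t φ
    exact ((hasDerivAt_cos φ).const_mul (g t)).deriv.trans (mul_neg _ _)
  ext t φ
  rw [hP]
  exact ((hasDerivAt_sin φ).const_mul (g t)).neg.deriv

theorem DeltaIII_mul_cos (g : ℝ → ℝ) :
    DeltaIII (fun t φ => g t * cos φ) = fun t φ => deltaIIIProfile g t * cos φ := by
  ext t φ
  simp only [DeltaIII, pderivT_mul_cos, pderivP_pderivP_mul_cos, deltaIIIProfile]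
  ring

theorem DeltaIII_iterate_mul_cos (n : ℕ) (g : ℝ → ℝ) :
    DeltaIII^[n] (fun t φ => g t * cos φ) = fun t φ => deltaIIIProfile^[n] g t * cos φ :=
  ((Function.Semiconj.iterate_right (f := fun g t φ => g t * cos φ)
    (fun g => (DeltaIII_mul_cos g).symm) n) g).symm

lemma deriv_deriv_eq_of_hasDerivAt {f f' : ℝ → ℝ} {f'' t : ℝ}
    (hf : ∀ᶠ s in 𝓝 t, HasDerivAt f (f' s) s) (hf' : HasDerivAt f' f'' t) :
    deriv (deriv f) t = f'' := by
  have hderiv : deriv f =ᶠ[𝓝 t] f' := hf.mono fun s hs => hs.deriv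
  rw [hderiv.deriv_eq]
  exact hf'.deriv

lemma deltaIIIProfile_eq_of_hasDerivAt {g g' : ℝ → ℝ} {g'' t : ℝ}
    (hg : ∀ᶠ s in 𝓝 t, HasDerivAt g (g' s) s) (hg' : HasDerivAt g' g'' t) :
    deltaIIIProfile g t = -g'' + sin t / cos t * g' t + g t / cos t ^ 2 := by
  rw [deltaIIIProfile, deriv_deriv_eq_of_hasDerivAt hg hg', hg.self_of_nhds.deriv]

-- No hypothesis on `t`: where `cos t = 0` both sides are `0`, as `x / 0 = 0`.
lemma deltaIIIProfile_const_add_mul_cos (a r : ℝ) :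
    deltaIIIProfile (fun t => a + r * cos t) = fun t => a / cos t ^ 2 + 2 * r * cos t := by
  ext t
  have hg : ∀ s, HasDerivAt (fun t => a + r * cos t) (-(r * sin s)) s := fun s => by
    simpa using ((hasDerivAt_cos s).const_mul r).const_add a
  have hg' : HasDerivAt (fun s => -(r * sin s)) (-(r * cos t)) t :=
    ((hasDerivAt_sin t).const_mul r).neg
  rw [deltaIIIProfile_eq_of_hasDerivAt (Eventually.of_forall hg) hg']
  by_cases hc : cos t = 0
  · simp [hc]
  · field_simp
    linear_combination -(r * cos t) * sin_sq_add_cos_sq t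

lemma deltaIIIProfile_div_cos_sq_add_mul_cos (a r t : ℝ) (hc : cos t ≠ 0) :
    deltaIIIProfile (fun s => a / cos s ^ 2 + 2 * r * cos s) t
      = (2 / cos t ^ 2 - 3 / cos t ^ 4) * a + 4 * r * cos t := by
  have hg : ∀ s, cos s ≠ 0 → HasDerivAt (fun s => a / cos s ^ 2 + 2 * r * cos s)
      (2 * a * sin s / cos s ^ 3 - 2 * r * sin s) s := fun s hs => by
    refine (((hasDerivAt_const s a).div ((hasDerivAt_cos s).pow 2) (pow_ne_zero 2 hs)).add
      ((hasDerivAt_cos s).const_mul (2 * r))).congr_deriv ?_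
    simp only [Pi.pow_apply]
    field_simp
    ring
  have hg' : HasDerivAt (fun s => 2 * a * sin s / cos s ^ 3 - 2 * r * sin s)
      (2 * a * (cos t ^ 2 + 3 * sin t ^ 2) / cos t ^ 4 - 2 * r * cos t) t := by
    refine ((((hasDerivAt_sin t).const_mul (2 * a)).div ((hasDerivAt_cos t).pow 3)
      (pow_ne_zero 3 hc)).sub ((hasDerivAt_sin t).const_mul (2 * r))).congr_deriv ?_
    simp only [Pi.pow_apply]
    field_simp
    push_cast
    ring
  have hnear : ∀ᶠ s in 𝓝 t, cos s ≠ 0 := continuous_cos.continuousAt.eventually_ne hc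
  rw [deltaIIIProfile_eq_of_hasDerivAt (hnear.mono hg) hg']
  field_simp
  linear_combination (-4 * a - 2 * r * cos t ^ 3) * sin_sq_add_cos_sq t

theorem stmt_3 (a r : ℝ) (t φ : ℝ) (h : Real.cos t ≠ 0) :
    (DeltaIII^[2] (fun t φ => (a + r * Real.cos t) * Real.cos φ)) t φ =
      (2 / (Real.cos t) ^ 2 - 3 / (Real.cos t) ^ 4) * (a * Real.cos φ)
        + 4 * r * Real.cos t * Real.cos φ := by
  rw [DeltaIII_iterate_mul_cos (g := fun t => a + r * cos t)]
  simp only [Function.iterate_succ_apply, Function.iterate_zero_apply, deltaIIIProfile_const_add_mul_cos]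
  rw [deltaIIIProfile_div_cos_sq_add_mul_cos a r t h]
  ring
end

section
/- Let c ≠ 0 be a real number, n ≥ 1 an integer, and Q a polynomial in two variables with real coefficients. Then the identity c/cos φ = Q(cos φ, sin φ) cannot hold for all φ in a nonempty open interval on which cos φ ≠ 0. -/
/-! The function `φ ↦ cos φ * Q (cos φ, sin φ) - c` is real analytic on all of `ℝ` and vanishes on
the interval, so by the identity theorem it vanishes everywhere; at `φ = π / 2` it equals `-c`. -/

open Set

theorem analyticOnNhd_eval_cos_sin (Q : MvPolynomial (Fin 2) ℝ) (s : Set ℝ) :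
    AnalyticOnNhd ℝ (fun φ ↦ MvPolynomial.eval ![Real.cos φ, Real.sin φ] Q) s := by
  simp_rw [← MvPolynomial.coe_aeval_eq_eval]
  refine AnalyticOnNhd.aeval_mvPolynomial (fun i ↦ ?_) Q
  fin_cases i
  · exact Real.analyticOnNhd_cos
  · exact Real.analyticOnNhd_sin

theorem AnalyticOnNhd.eq_of_eqOn_Ioo {E : Type*} [NormedAddCommGroup E] [NormedSpace ℝ E]
    {f g : ℝ → E} (hf : AnalyticOnNhd ℝ f univ) (hg : AnalyticOnNhd ℝ g univ) {x y : ℝ}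
    (hxy : x < y) (h : EqOn f g (Ioo x y)) : f = g := by
  have hmid : (x + y) / 2 ∈ Ioo x y := ⟨by linarith, by linarith⟩
  have hev : f =ᶠ[nhds ((x + y) / 2)] g :=
    Filter.eventually_of_mem (isOpen_Ioo.mem_nhds hmid) h
  exact funext fun φ ↦
    hf.eqOn_of_preconnected_of_eventuallyEq hg isPreconnected_univ (mem_univ _) hev (mem_univ φ)

theorem stmt_8_general (c : ℝ) (hc : c ≠ 0) (Q : MvPolynomial (Fin 2) ℝ)
    (x y : ℝ) (hxy : x < y) (hcos : ∀ φ ∈ Set.Ioo x y, Real.cos φ ≠ 0) :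
    ¬ ∀ φ ∈ Set.Ioo x y,
        c / Real.cos φ = MvPolynomial.eval ![Real.cos φ, Real.sin φ] Q := by
  intro h
  have hcleared : EqOn (fun φ ↦ Real.cos φ * MvPolynomial.eval ![Real.cos φ, Real.sin φ] Q)
      (fun _ ↦ c) (Ioo x y) := fun φ hφ ↦ by
    simp only [← h φ hφ, mul_div_cancel₀ c (hcos φ hφ)]
  have hglobal := AnalyticOnNhd.eq_of_eqOn_Ioo
    (Real.analyticOnNhd_cos.mul (analyticOnNhd_eval_cos_sin Q univ)) analyticOnNhd_const hxy
    hcleared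
  have := congrFun hglobal (Real.pi / 2)
  simp only [Real.cos_pi_div_two, zero_mul] at this
  exact hc this.symm

theorem stmt_8 (c : ℝ) (hc : c ≠ 0) (n : ℕ) (hn : 1 ≤ n) (Q : MvPolynomial (Fin 2) ℝ)
    (x y : ℝ) (hxy : x < y) (hcos : ∀ φ ∈ Set.Ioo x y, Real.cos φ ≠ 0) :
    ¬ ∀ φ ∈ Set.Ioo x y,
        c / Real.cos φ = MvPolynomial.eval ![Real.cos φ, Real.sin φ] Q :=
  stmt_8_general c hc Q x y hxy hcos
end

section
/- Let g(t,φ) = cos φ / cos^{k} t on an open set where cos t ≠ 0, with k a positive integer, and let Δ be the operator Δf = -f_tt + (sin t / cos t) f_t - (1/cos² t) f_φφ. Then Δg lies in the span of the functions cos φ / cos^k t and cos φ / cos^{k+2} t, with the coefficient of cos φ / cos^{k+2} t equal to -(k² - 1). -/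
open Real

lemma hasDerivAt_inv_cos_pow (k : ℕ) {t : ℝ} (ht : cos t ≠ 0) :
    HasDerivAt (fun s => (cos s ^ k)⁻¹) (k * sin t / cos t ^ (k + 1)) t := by
  refine (((hasDerivAt_cos t).fun_pow k).fun_inv (pow_ne_zero k ht)).congr_deriv ?_
  rcases k with _ | m
  · simp
  · field_simp
    push_cast
    ring

lemma hasDerivAt_sin_div_cos_pow (k : ℕ) {t : ℝ} (ht : cos t ≠ 0) :
    HasDerivAt (fun s => sin s / cos s ^ k)
      ((cos t ^ 2 + k * sin t ^ 2) / cos t ^ (k + 1)) t := by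
  refine ((hasDerivAt_sin t).mul (hasDerivAt_inv_cos_pow k ht)).congr_deriv ?_
  field_simp
  ring

lemma pderivT_cos_div_cos_pow (k : ℕ) {t : ℝ} (φ : ℝ) (ht : cos t ≠ 0) :
    pderivT (fun t φ => cos φ / cos t ^ k) t φ = k * cos φ * (sin t / cos t ^ (k + 1)) := by
  refine (((hasDerivAt_inv_cos_pow k ht).const_mul (cos φ)).congr_deriv ?_).deriv
  ring

lemma pderivT_pderivT_cos_div_cos_pow (k : ℕ) {t : ℝ} (φ : ℝ) (ht : cos t ≠ 0) :
    pderivT (pderivT fun t φ => cos φ / cos t ^ k) t φ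
      = k * cos φ * ((cos t ^ 2 + (k + 1) * sin t ^ 2) / cos t ^ (k + 2)) := by
  have h_near : (fun s => pderivT (fun t φ => cos φ / cos t ^ k) s φ)
      =ᶠ[nhds t] fun s => k * cos φ * (sin s / cos s ^ (k + 1)) := by
    filter_upwards [continuous_cos.continuousAt.eventually_ne ht] with s hs
    exact pderivT_cos_div_cos_pow k φ hs
  rw [pderivT, h_near.deriv_eq, ((hasDerivAt_sin_div_cos_pow (k + 1) ht).const_mul _).deriv]
  push_cast
  ring

lemma pderivP_pderivP_cos_div (a : ℝ → ℝ) (t φ : ℝ) :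
    pderivP (pderivP fun t φ => cos φ / a t) t φ = -(cos φ / a t) := by
  simp only [pderivP, deriv_div_const, Real.deriv_cos', deriv.fun_neg, Real.deriv_sin, neg_div]

theorem stmt_10_general (k : ℕ) :
    ∃ c₁ : ℝ, ∀ t φ : ℝ, Real.cos t ≠ 0 →
      DeltaIII (fun t φ => Real.cos φ / (Real.cos t) ^ k) t φ =
        c₁ * (Real.cos φ / (Real.cos t) ^ k)
          + (-((k : ℝ) ^ 2 - 1)) * (Real.cos φ / (Real.cos t) ^ (k + 2)) := by
  -- `cos φ` is an eigenfunction of `-∂²_φ`; using `sin² t = 1 - cos² t`, the `t`-derivatives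
  -- contribute `(k² - k) / cos^k t` and `(1 - k²) / cos^(k+2) t`.
  refine ⟨(k : ℝ) ^ 2 - k, fun t φ ht => ?_⟩
  rw [DeltaIII, pderivT_pderivT_cos_div_cos_pow k φ ht, pderivT_cos_div_cos_pow k φ ht,
    pderivP_pderivP_cos_div]
  have h_sin_sq : sin t ^ 2 = 1 - cos t ^ 2 := by linarith [sin_sq_add_cos_sq t]
  field_simp
  rw [h_sin_sq]
  ring

theorem stmt_10 (k : ℕ) (hk : 0 < k) :
    ∃ c₁ : ℝ, ∀ t φ : ℝ, Real.cos t ≠ 0 →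
      DeltaIII (fun t φ => Real.cos φ / (Real.cos t) ^ k) t φ =
        c₁ * (Real.cos φ / (Real.cos t) ^ k)
          + (-((k : ℝ) ^ 2 - 1)) * (Real.cos φ / (Real.cos t) ^ (k + 2)) :=
  stmt_10_general k
end

section
/- Let Δ be the operator Δf = -f_tt + (sin t/cos t) f_t - (1/cos² t) f_φφ and suppose the function x₁(t,φ) = (a + r cos t) cos φ (with a, r real, r ≠ 0, a ≠ 0) satisfies Δ x₁ = λ x₁ for some real λ on a nonempty open set where cos t ≠ 0. Then a contradiction follows; i.e., x₁ is not an eigenfunction of Δ. -/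
/-
At `φ = 0` the eigenvalue equation, multiplied by `cos² t` and simplified with
`sin² t = 1 - cos² t`, says that the trigonometric polynomial
`r (2 - λ) cos³ t - λ a cos² t + a` vanishes on the interval. Being analytic in `t`, it then
vanishes everywhere, and at `t = π / 2` it equals `a ≠ 0`.
-/

open Real

open Filter Topology

section Separable

variable (g h : ℝ → ℝ)

theorem pderivT_mul : pderivT (fun t φ => g t * h φ) = fun t φ => deriv g t * h φ := by
  funext t φ
  exact deriv_mul_const_field (h φ)

theorem pderivP_mul : pderivP (fun t φ => g t * h φ) = fun t φ => g t * deriv h φ := by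
  funext t φ
  exact deriv_const_mul_field (g t)

theorem deltaIII_mul (t φ : ℝ) :
    DeltaIII (fun t φ => g t * h φ) t φ =
      (-deriv (deriv g) t + sin t / cos t * deriv g t) * h φ
        - g t / cos t ^ 2 * deriv (deriv h) φ := by
  simp only [DeltaIII, pderivT_mul, pderivP_mul]
  ring

end Separable

theorem deltaIII_torusCoord (a r t φ : ℝ) :
    DeltaIII (fun t φ => (a + r * cos t) * cos φ) t φ =
      (r * cos t - r * sin t ^ 2 / cos t + (a + r * cos t) / cos t ^ 2) * cos φ := by
  have hg : deriv (fun t => a + r * cos t) = fun t => -(r * sin t) := by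
    funext t; simp
  have hg' : deriv (fun t => -(r * sin t)) t = -(r * cos t) := by simp
  have hh : deriv (deriv cos) φ = -cos φ := by simp
  rw [deltaIII_mul, hg, hg', hh]
  ring

theorem cubic_eq_zero_of_deltaIII_torusCoord_eq {a r lam t : ℝ} (hcos : cos t ≠ 0)
    (h : DeltaIII (fun t φ => (a + r * cos t) * cos φ) t 0 =
      lam * ((a + r * cos t) * cos 0)) :
    r * (2 - lam) * cos t ^ 3 - lam * a * cos t ^ 2 + a = 0 := by
  rw [deltaIII_torusCoord, cos_zero, mul_one, mul_one] at h
  field_simp at h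
  linear_combination h + r * cos t * sin_sq_add_cos_sq t

theorem stmt_18_general (a r lam : ℝ) (ha : a ≠ 0) (x y : ℝ) (hxy : x < y)
    (hcos : ∀ t ∈ Set.Ioo x y, Real.cos t ≠ 0) :
    ¬ ∀ t ∈ Set.Ioo x y, ∀ φ : ℝ,
        DeltaIII (fun t φ => (a + r * Real.cos t) * Real.cos φ) t φ =
          lam * ((a + r * Real.cos t) * Real.cos φ) := by
  intro H
  set F : ℝ → ℝ := fun t => r * (2 - lam) * cos t ^ 3 - lam * a * cos t ^ 2 + a
  have hF_analytic : AnalyticOnNhd ℝ F Set.univ := fun t _ => by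
    unfold F; fun_prop
  have hF_local : F =ᶠ[𝓝 ((x + y) / 2)] 0 := by
    filter_upwards [Ioo_mem_nhds (left_lt_add_div_two.mpr hxy) (add_div_two_lt_right.mpr hxy)]
      with t ht
    exact cubic_eq_zero_of_deltaIII_torusCoord_eq (hcos t ht) (H t ht 0)
  have hF_zero : F = 0 := hF_analytic.eq_of_eventuallyEq analyticOnNhd_const hF_local
  exact ha (by simpa [F] using congrFun hF_zero (π / 2))

theorem stmt_18 (a r lam : ℝ) (ha : a ≠ 0) (hr : r ≠ 0) (x y : ℝ) (hxy : x < y)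
    (hcos : ∀ t ∈ Set.Ioo x y, Real.cos t ≠ 0) :
    ¬ ∀ t ∈ Set.Ioo x y, ∀ φ : ℝ,
        DeltaIII (fun t φ => (a + r * Real.cos t) * Real.cos φ) t φ =
          lam * ((a + r * Real.cos t) * Real.cos φ) :=
  stmt_18_general a r lam ha x y hxy hcos
end
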